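/- Let n be a non-negative integer and let s be a complex number such that s is not equal to any of −1, −2, …, −n. Then ∑_{k=0}^{n} C(s+k, k) · C(2n−2k, n−k) · 4^k = C(2n,n) · C(2n+2s+1, 2n) / C(n+s, n), where C(2n,n) and C(2n−2k,n−k) are ordinary binomial coefficients. -/

import Mathlib

/-!
Upper negation turns `C(s+k,k)` into `(-1)^k C(-s-1,k)` and `C(2m,m)` into `(-4)^m C(-1/2,m)`,
so Chu–Vandermonde sums the left side to `4^n C(n+s+1/2,n)`; in generating functions this is
`(1-4x)^(-s-1) (1-4x)^(-1/2) = (1-4x)^(-s-3/2)`. The duplication formula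
`C(2n,n) C(2z,2n) = 4^n C(z,n) C(z-1/2,n)` at `z = n+s+1/2` turns this into the right side.
-/

open Finset

/-- Generalized binomial coefficient `C(z,k) = z(z-1)⋯(z-k+1)/k!`. -/
noncomputable def cchoose (z : ℂ) (k : ℕ) : ℂ :=
  (∏ i ∈ Finset.range k, (z - i)) / (k.factorial : ℂ)

theorem cchoose_eq_ringChoose (z : ℂ) (k : ℕ) : cchoose z k = Ring.choose z k := by
  rw [Ring.choose_eq_smul, ← Polynomial.aeval_eq_smeval, cchoose, smul_eq_mul]
  simp [Polynomial.aeval_def, Polynomial.eval₂_eq_eval_map, descPochhammer_map,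
    descPochhammer_eval_eq_prod_range, div_eq_inv_mul]

theorem cchoose_natCast (m k : ℕ) : cchoose m k = m.choose k := by
  rw [cchoose_eq_ringChoose, Ring.choose_natCast]

theorem cchoose_neg (z : ℂ) (k : ℕ) : cchoose (-z) k = (-1) ^ k * cchoose (z + k - 1) k := by
  rw [cchoose_eq_ringChoose, cchoose_eq_ringChoose, Ring.choose_neg, Units.smul_def,
    zsmul_eq_mul, Int.cast_negOnePow, zpow_natCast]

theorem cchoose_add (z w : ℂ) (n : ℕ) :
    cchoose (z + w) n = ∑ k ∈ range (n + 1), cchoose z k * cchoose w (n - k) := by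
  simp only [cchoose_eq_ringChoose]
  rw [Ring.add_choose_eq n (Commute.all z w), Nat.sum_antidiagonal_eq_sum_range_succ
    (fun i j => Ring.choose z i * Ring.choose w j)]

theorem cchoose_ne_zero {z : ℂ} {n : ℕ} (h : ∀ i < n, z ≠ i) : cchoose z n ≠ 0 :=
  div_ne_zero (prod_ne_zero_iff.mpr fun i hi => sub_ne_zero.mpr (h i (mem_range.mp hi)))
    (Nat.cast_ne_zero.mpr n.factorial_ne_zero)

theorem prod_range_two_mul {M : Type*} [CommMonoid M] (f : ℕ → M) (n : ℕ) :
    ∏ i ∈ range (2 * n), f i = ∏ i ∈ range n, (f (2 * i) * f (2 * i + 1)) := by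
  induction n with
  | zero => simp
  | succ n ih => rw [mul_add_one, prod_range_succ, prod_range_succ, ih, prod_range_succ, mul_assoc]

theorem centralBinom_mul_cchoose_two_mul (z : ℂ) (n : ℕ) :
    ((2 * n).choose n : ℂ) * cchoose (2 * z) (2 * n) =
      4 ^ n * cchoose z n * cchoose (z - 1 / 2) n := by
  have hfac : ((2 * n).choose n : ℂ) * n.factorial * n.factorial = (2 * n).factorial := by
    rw [two_mul]; exact_mod_cast Nat.add_choose_mul_factorial_mul_factorial n n
  have hprod : ∏ i ∈ range (2 * n), (2 * z - i) =
      4 ^ n * ((∏ i ∈ range n, (z - i)) * ∏ i ∈ range n, (z - 1 / 2 - i)) := by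
    rw [prod_range_two_mul, ← prod_mul_distrib]
    nth_rw 2 [← card_range n]
    rw [pow_card_mul_prod]
    refine prod_congr rfl fun i _ => ?_
    push_cast; ring
  have hn : (n.factorial : ℂ) ≠ 0 := Nat.cast_ne_zero.mpr n.factorial_ne_zero
  have hc : ((2 * n).choose n : ℂ) ≠ 0 := by exact_mod_cast (Nat.choose_pos (by omega)).ne'
  unfold cchoose
  rw [hprod, ← hfac]
  field_simp

theorem centralBinom_eq_neg_four_pow_mul_cchoose (m : ℕ) :
    ((2 * m).choose m : ℂ) = (-4) ^ m * cchoose (-(1 / 2)) m := by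
  have h := centralBinom_mul_cchoose_two_mul m m
  rw [show 2 * (m : ℂ) = ((2 * m : ℕ) : ℂ) by push_cast; ring, cchoose_natCast, cchoose_natCast,
    Nat.choose_self, Nat.choose_self] at h
  rw [cchoose_neg, show 1 / 2 + (m : ℂ) - 1 = m - 1 / 2 by ring, ← mul_assoc, ← mul_pow]
  simpa using h

theorem sum_cchoose_mul_centralBinom (s : ℂ) (n : ℕ) :
    ∑ k ∈ range (n + 1), cchoose (s + k) k * ((2 * n - 2 * k).choose (n - k) : ℂ) * 4 ^ k =
      4 ^ n * cchoose (n + s + 1 / 2) n := by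
  have hvan := cchoose_add (-(s + 1)) (-(1 / 2)) n
  rw [← neg_add, cchoose_neg, show s + 1 + 1 / 2 + n - 1 = n + s + 1 / 2 by ring] at hvan
  have hterm : ∀ k ∈ range (n + 1),
      cchoose (s + k) k * ((2 * n - 2 * k).choose (n - k) : ℂ) * 4 ^ k =
        (-4) ^ n * (cchoose (-(s + 1)) k * cchoose (-(1 / 2)) (n - k)) := by
    intro k hk
    obtain ⟨j, rfl⟩ := Nat.exists_eq_add_of_le (mem_range_succ_iff.mp hk)
    rw [← Nat.mul_sub, Nat.add_sub_cancel_left, centralBinom_eq_neg_four_pow_mul_cchoose,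
      cchoose_neg (s + 1), show s + 1 + k - 1 = s + k by ring, pow_add, neg_pow (4 : ℂ) k]
    have hsq : ((-1 : ℂ) ^ k) ^ 2 = 1 := by rw [← pow_mul, pow_mul']; simp
    linear_combination (-(4 : ℂ) ^ k * (-4) ^ j * cchoose (s + k) k * cchoose (-(1 / 2)) j) * hsq
  rw [sum_congr rfl hterm, ← mul_sum, ← hvan, ← mul_assoc, ← mul_pow]
  norm_num

theorem stmt_16 (n : ℕ) (s : ℂ)
    (hs : ∀ i : ℕ, 1 ≤ i → i ≤ n → s ≠ -(i : ℂ)) :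
    ∑ k ∈ range (n + 1), cchoose (s + k) k * ((2 * n - 2 * k).choose (n - k) : ℂ) *
        4 ^ k =
      ((2 * n).choose n : ℂ) * cchoose (2 * n + 2 * s + 1) (2 * n) /
        cchoose ((n : ℂ) + s) n := by
  have hne : cchoose ((n : ℂ) + s) n ≠ 0 := cchoose_ne_zero fun i hi heq =>
    hs (n - i) (by omega) (by omega) (by push_cast [hi.le]; linear_combination heq)
  have hdup := centralBinom_mul_cchoose_two_mul (n + s + 1 / 2) n
  rw [show 2 * ((n : ℂ) + s + 1 / 2) = 2 * n + 2 * s + 1 by ring,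
    show (n : ℂ) + s + 1 / 2 - 1 / 2 = n + s by ring] at hdup
  rw [eq_div_iff hne, sum_cchoose_mul_centralBinom, hdup, mul_assoc]
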